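/- Let M be a compact metric space, φ a continuous flow on M, and H ⊆ M a compact invariant set. Then H has the finite pseudo-orbit tracing property (FPOTP) if and only if H has the 'normal finite' pseudo-orbit tracing property, i.e., for every ε > 0 there exist δ, T > 0 such that every finite (δ,T)-chain of H is ε-traced by some point of M via a surjective reparametrization g ∈ Rep* (in other words, for finite chains, requiring the reparametrization to lie in Rep* instead of Rep yields the same tracing property). -/

import Mathlib

/-- Partial time sums of a bi-infinite chain: `S 0 = 0`, `S i = t 0 + ⋯ + t (i-1)` for `i > 0`,
and `S i = -(t (-1) + ⋯ + t i)` for `i < 0`. -/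
noncomputable def chainS (t : ℤ → ℝ) (i : ℤ) : ℝ :=
  if 0 ≤ i then ∑ j ∈ Finset.range i.toNat, t (j : ℤ)
  else -∑ j ∈ Finset.range (-i).toNat, t (-((j : ℤ) + 1))

/-- Partial time sums of a finite chain: `S 0 = 0`, `S i = t 0 + ⋯ + t (i-1)`. -/
noncomputable def finChainS (t : ℕ → ℝ) (i : ℕ) : ℝ := ∑ j ∈ Finset.range i, t j

/-- `g` is a reparametrization: continuous, strictly increasing, `g 0 = 0`. -/
def IsRep (g : ℝ → ℝ) : Prop := Continuous g ∧ StrictMono g ∧ g 0 = 0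

/-- `g` is a surjective reparametrization (the class `Rep*`). -/
def IsRepStar (g : ℝ → ℝ) : Prop := IsRep g ∧ Function.Surjective g

/-- The class `Rep(ε)`: surjective reparametrizations whose difference quotients are
ε-close to 1. -/
def IsRepEps (ε : ℝ) (g : ℝ → ℝ) : Prop :=
  IsRepStar g ∧ ∀ s t : ℝ, s ≠ t → |(g s - g t) / (s - t) - 1| ≤ ε

variable {M : Type*} [MetricSpace M]

/-- `{x i ; t i}_{i ∈ ℤ}` is a (bi-infinite) `(δ,T)`-chain of `H` for the flow `φ`. -/
def IsChainDT (φ : ℝ → M → M) (H : Set M) (δ T : ℝ) (x : ℤ → M) (t : ℤ → ℝ) : Prop :=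
  (∀ i, x i ∈ H) ∧ (∀ i, T ≤ t i) ∧ ∀ i, dist (φ (t i) (x i)) (x (i + 1)) ≤ δ

/-- `{x i ; t i}_{i = 0}^{k}` is a finite `(δ,T)`-chain of `H` for the flow `φ`. -/
def IsFinChainDT (φ : ℝ → M → M) (H : Set M) (δ T : ℝ) (k : ℕ) (x : ℕ → M) (t : ℕ → ℝ) :
    Prop :=
  (∀ i ≤ k, x i ∈ H) ∧ (∀ i ≤ k, T ≤ t i) ∧ ∀ i < k, dist (φ (t i) (x i)) (x (i + 1)) ≤ δ

/-- The chain trajectory `x₀ * s = φ (s - S i) (x i)` (for `S i ≤ s < S (i+1)`) of a bi-infinite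
chain is ε-close, for all real times `s`, to the `g`-reparametrized orbit of `z`. -/
def TracedVia (φ : ℝ → M → M) (ε : ℝ) (x : ℤ → M) (t : ℤ → ℝ) (g : ℝ → ℝ) (z : M) : Prop :=
  ∀ i : ℤ, ∀ s : ℝ, chainS t i ≤ s → s < chainS t (i + 1) →
    dist (φ (s - chainS t i) (x i)) (φ (g s) z) ≤ ε

/-- The chain trajectory of a finite chain is ε-close, for all times `s ∈ [0, S (k+1)]`,
to the `g`-reparametrized orbit of `z`. -/
def FinTracedVia (φ : ℝ → M → M) (ε : ℝ) (k : ℕ) (x : ℕ → M) (t : ℕ → ℝ)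
    (g : ℝ → ℝ) (z : M) : Prop :=
  (∀ i ≤ k, ∀ s : ℝ, finChainS t i ≤ s → s < finChainS t (i + 1) →
    dist (φ (s - finChainS t i) (x i)) (φ (g s) z) ≤ ε) ∧
  dist (φ (t k) (x k)) (φ (g (finChainS t (k + 1))) z) ≤ ε

/-- Weak pseudo-orbit tracing property. -/
def WPOTP (φ : ℝ → M → M) (H : Set M) : Prop :=
  ∀ ε > (0 : ℝ), ∃ δ > (0 : ℝ), ∃ T > (0 : ℝ), ∀ x t, IsChainDT φ H δ T x t →
    ∃ z : M, ∃ g : ℝ → ℝ, IsRep g ∧ TracedVia φ ε x t g z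

/-- Normal pseudo-orbit tracing property. -/
def NPOTP (φ : ℝ → M → M) (H : Set M) : Prop :=
  ∀ ε > (0 : ℝ), ∃ δ > (0 : ℝ), ∃ T > (0 : ℝ), ∀ x t, IsChainDT φ H δ T x t →
    ∃ z : M, ∃ g : ℝ → ℝ, IsRepStar g ∧ TracedVia φ ε x t g z

/-- Strong pseudo-orbit tracing property. -/
def SPOTP (φ : ℝ → M → M) (H : Set M) : Prop :=
  ∀ ε > (0 : ℝ), ∃ δ > (0 : ℝ), ∃ T > (0 : ℝ), ∀ x t, IsChainDT φ H δ T x t →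
    ∃ z : M, ∃ g : ℝ → ℝ, IsRepEps ε g ∧ TracedVia φ ε x t g z

/-- Finite pseudo-orbit tracing property. -/
def FPOTP (φ : ℝ → M → M) (H : Set M) : Prop :=
  ∀ ε > (0 : ℝ), ∃ δ > (0 : ℝ), ∃ T > (0 : ℝ), ∀ k x t, IsFinChainDT φ H δ T k x t →
    ∃ z : M, ∃ g : ℝ → ℝ, IsRep g ∧ FinTracedVia φ ε k x t g z

/-- Strong finite pseudo-orbit tracing property. -/
def SFPOTP (φ : ℝ → M → M) (H : Set M) : Prop :=
  ∀ ε > (0 : ℝ), ∃ δ > (0 : ℝ), ∃ T > (0 : ℝ), ∀ k x t, IsFinChainDT φ H δ T k x t →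
    ∃ z : M, ∃ g : ℝ → ℝ, IsRepEps ε g ∧ FinTracedVia φ ε k x t g z

/-!
For a finite chain only the values of the reparametrization on `[0, S (k+1)]` matter. Outside
this interval any `g ∈ Rep` can be replaced by translates of the identity; the result is still
continuous and strictly increasing, and now tends to `±∞` at `±∞`, so it lies in `Rep*`.
-/

open Set Filter

lemma StrictMono.exists_surjective_eqOn_Icc {g : ℝ → ℝ} (hg : StrictMono g)
    (hcont : Continuous g) {a b : ℝ} (hab : a ≤ b) :
    ∃ g' : ℝ → ℝ, Continuous g' ∧ StrictMono g' ∧ Function.Surjective g' ∧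
      EqOn g' g (Icc a b) := by
  set c : ℝ → ℝ := fun s => max a (min b s)
  have hc_mem : ∀ s, c s ∈ Icc a b := fun s => ⟨le_max_left _ _, max_le hab (min_le_left _ _)⟩
  have hc_mono : Monotone c := monotone_const.max (monotone_const.min monotone_id)
  have hc : Continuous c := continuous_const.max (continuous_const.min continuous_id)
  -- `c` is 1-Lipschitz, so the remainder `s - c s` is monotone as well
  have hr_mono : Monotone fun s => s - c s := by
    intro x y hxy
    simp only [c, max_def, min_def]
    split_ifs <;> linarith
  set g' : ℝ → ℝ := fun s => g (c s) + (s - c s)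
  have hg'_cont : Continuous g' := (hcont.comp hc).add (continuous_id.sub hc)
  refine ⟨g', hg'_cont, ?_, ?_, ?_⟩
  · intro x y hxy
    rcases (hc_mono hxy.le).lt_or_eq with hlt | heq
    · linarith [hg hlt, hr_mono hxy.le]
    · simp only [g', heq]
      linarith
  · have hlow : ∀ s, s + (g a - b) ≤ g' s := fun s => by
      linarith [hg.monotone (hc_mem s).1, (hc_mem s).2]
    have hup : ∀ s, g' s ≤ s + (g b - a) := fun s => by
      linarith [hg.monotone (hc_mem s).2, (hc_mem s).1]
    exact hg'_cont.surjective
      (tendsto_atTop_mono hlow (tendsto_atTop_add_const_right _ _ tendsto_id))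
      (tendsto_atBot_mono hup (tendsto_atBot_add_const_right _ _ tendsto_id))
  · intro s hs
    simp [g', c, max_eq_right hs.1, min_eq_right hs.2]

lemma IsRep.exists_isRepStar_eqOn {g : ℝ → ℝ} (hg : IsRep g) {L : ℝ} (hL : 0 ≤ L) :
    ∃ g' : ℝ → ℝ, IsRepStar g' ∧ EqOn g' g (Icc 0 L) := by
  obtain ⟨hcont, hmono, hg0⟩ := hg
  obtain ⟨g', hcont', hmono', hsurj, heq⟩ := hmono.exists_surjective_eqOn_Icc hcont hL
  exact ⟨g', ⟨⟨hcont', hmono', (heq (left_mem_Icc.2 hL)).trans hg0⟩, hsurj⟩, heq⟩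

@[simp]
lemma finChainS_zero (t : ℕ → ℝ) : finChainS t 0 = 0 := by
  simp [finChainS]

lemma finChainS_mono {t : ℕ → ℝ} {k i j : ℕ} (ht : ∀ m ≤ k, 0 ≤ t m) (hij : i ≤ j)
    (hj : j ≤ k + 1) : finChainS t i ≤ finChainS t j :=
  Finset.sum_le_sum_of_subset_of_nonneg (Finset.range_subset_range.2 hij)
    fun m hm _ => ht m (by rw [Finset.mem_range] at hm; omega)

lemma finChainS_nonneg {t : ℕ → ℝ} {k i : ℕ} (ht : ∀ m ≤ k, 0 ≤ t m) (hi : i ≤ k + 1) :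
    0 ≤ finChainS t i := by
  simpa using finChainS_mono ht (Nat.zero_le i) hi

lemma FinTracedVia.congr_eqOn {φ : ℝ → M → M} {ε : ℝ} {k : ℕ}
    {x : ℕ → M} {t : ℕ → ℝ} {g g' : ℝ → ℝ} {z : M} (htr : FinTracedVia φ ε k x t g z)
    (ht : ∀ i ≤ k, 0 ≤ t i) (hgg' : EqOn g' g (Icc 0 (finChainS t (k + 1)))) :
    FinTracedVia φ ε k x t g' z := by
  refine ⟨fun i hi s hs hs' => ?_, ?_⟩
  · have hs_mem : s ∈ Icc 0 (finChainS t (k + 1)) :=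
      ⟨(finChainS_nonneg ht (by omega)).trans hs,
        hs'.le.trans (finChainS_mono ht (by omega) le_rfl)⟩
    rw [hgg' hs_mem]
    exact htr.1 i hi s hs hs'
  · rw [hgg' ⟨finChainS_nonneg ht le_rfl, le_rfl⟩]
    exact htr.2

theorem fpotp_iff_normal_finite_potp_general {M : Type*} [MetricSpace M]
    (φ : ℝ → M → M)
    (H : Set M) :
    FPOTP φ H ↔
      ∀ ε > (0 : ℝ), ∃ δ > (0 : ℝ), ∃ T > (0 : ℝ), ∀ k x t, IsFinChainDT φ H δ T k x t →
        ∃ z : M, ∃ g : ℝ → ℝ, IsRepStar g ∧ FinTracedVia φ ε k x t g z := by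
  constructor
  · intro hF ε hε
    obtain ⟨δ, hδ, T, hT, htrace⟩ := hF ε hε
    refine ⟨δ, hδ, T, hT, fun k x t hchain => ?_⟩
    obtain ⟨z, g, hg, htr⟩ := htrace k x t hchain
    have ht : ∀ i ≤ k, 0 ≤ t i := fun i hi => hT.le.trans (hchain.2.1 i hi)
    obtain ⟨g', hg', hgg'⟩ := hg.exists_isRepStar_eqOn (finChainS_nonneg ht le_rfl)
    exact ⟨z, g', hg', htr.congr_eqOn ht hgg'⟩
  · intro hN ε hε
    obtain ⟨δ, hδ, T, hT, htrace⟩ := hN ε hε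
    refine ⟨δ, hδ, T, hT, fun k x t hchain => ?_⟩
    obtain ⟨z, g, hg, htr⟩ := htrace k x t hchain
    exact ⟨z, g, hg.1, htr⟩

theorem fpotp_iff_normal_finite_potp {M : Type*} [MetricSpace M] [CompactSpace M]
    (φ : ℝ → M → M)
    (hflow_cont : Continuous fun p : ℝ × M => φ p.1 p.2)
    (hflow_zero : ∀ x : M, φ 0 x = x)
    (hflow_add : ∀ s t : ℝ, ∀ x : M, φ (s + t) x = φ s (φ t x))
    (H : Set M) (hHcomp : IsCompact H) (hHinv : ∀ τ : ℝ, φ τ '' H = H) :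
    FPOTP φ H ↔
      ∀ ε > (0 : ℝ), ∃ δ > (0 : ℝ), ∃ T > (0 : ℝ), ∀ k x t, IsFinChainDT φ H δ T k x t →
        ∃ z : M, ∃ g : ℝ → ℝ, IsRepStar g ∧ FinTracedVia φ ε k x t g z :=
  fpotp_iff_normal_finite_potp_general φ H
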